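/- Let G be a finite simple graph, let r' ≥ 0 and m ≥ 0 be integers, and let (ψ_S) be an r'-local predicate family on G. Suppose there exists a set W₀ ⊆ V(G) with |W₀| = m such that any two distinct vertices of W₀ are at distance greater than 2r' in G and ψ_{V(G)}(w) holds for every w ∈ W₀. Let λ be a layering of G and let r, ℓ be integers with r ≥ r' and ℓ > 2r(3m + 1). Then for all but at most 6rm of the ℓ − 2r distinct (ℓ, r)-covers R of the integers, there exists an m-plan p for R such that for every I ∈ R there is a set W_I ⊆ λ⁻¹(M_{2r}(I)) with |W_I| = p(I), whose vertices are pairwise at distance greater than 2r' in G[λ⁻¹(I)] and satisfy ψ_{λ⁻¹(I)}. -/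

import Mathlib

/-!
The middle parts `M_{2r}` of consecutive intervals of an `(l, r)`-cover are separated by gaps
of exactly `2r` integers, so a fixed layer `x` misses every middle part for only `2r` of the
`l - 2r` residues. Discarding the residues that are bad for the layer of some `w ∈ W₀` costs
at most `2rm` covers. For any other cover, send each `w ∈ W₀` to the interval whose middle part
contains `λ(w)`; the fibre sizes form the plan. Distances only grow when passing to
`G[λ⁻¹(I)]`, and since `λ` is `1`-Lipschitz the `r'`-ball around `w` stays inside `λ⁻¹(I)`, so
locality transfers `ψ`.
-/

/-- A layering of a simple graph: adjacent vertices differ by at most 1. -/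
def IsLayering {V : Type*} (G : SimpleGraph V) (lam : V → ℤ) : Prop :=
  ∀ ⦃u v : V⦄, G.Adj u v → |lam u - lam v| ≤ 1

/-- The spanning subgraph of `G` keeping only the edges with both ends in `U`.
Reachability and distances between vertices of `U` in this graph coincide with those
in the induced subgraph `G[U]`. -/
def restrictSet {V : Type*} (G : SimpleGraph V) (U : Set V) : SimpleGraph V where
  Adj u v := G.Adj u v ∧ u ∈ U ∧ v ∈ U
  symm := ⟨fun _ _ ⟨h, hu, hv⟩ => ⟨h.symm, hv, hu⟩⟩
  loopless := ⟨fun u ⟨h, _, _⟩ => G.irrefl h⟩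

/-- The interval of `l` consecutive integers with left endpoint `i`. -/
def Iv (l : ℕ) (i : ℤ) : Set ℤ := Set.Icc i (i + l - 1)

/-- The middle part `M_d(I)` of the interval of length `l` with left endpoint `i`. -/
def Md (l d : ℕ) (i : ℤ) : Set ℤ := Set.Icc (i + d) (i + l - d - 1)

/-- `i` is a left endpoint of an interval of the `(l, r)`-cover with residue `n`,
i.e. `i ≡ n (mod l − 2r)`. -/
def inCover (l r : ℕ) (n i : ℤ) : Prop := ((l : ℤ) - 2 * r) ∣ (i - n)

/-- An `m`-plan for the `(l, r)`-cover with residue `n`: a finitely supported function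
on intervals (identified with their left endpoints) with values summing to `m`,
supported on the intervals of the cover. -/
def IsPlan (l r : ℕ) (n : ℤ) (m : ℕ) (p : ℤ → ℕ) : Prop :=
  {i | p i ≠ 0}.Finite ∧ (∀ i, p i ≠ 0 → inCover l r n i) ∧ ∑ᶠ i, p i = m

/-- All vertices of `W` are pairwise at distance greater than `2r'` in `G` (vertices in
different components being at infinite distance). -/
def PairwiseFar {V : Type*} (G : SimpleGraph V) (r' : ℕ) (W : Finset V) : Prop :=
  ∀ w ∈ W, ∀ w' ∈ W, w ≠ w' → (G.Reachable w w' → 2 * r' < G.dist w w')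

/-- An `r'`-local predicate family on `G`: a family of predicates `ψ S` (for `S ⊆ V`)
such that whenever `S` contains the ball of radius `r'` around `v`, `ψ S v ↔ ψ univ v`. -/
def IsLocalFamily {V : Type*} (G : SimpleGraph V) (r' : ℕ) (ψ : Set V → V → Prop) : Prop :=
  ∀ (v : V) (S : Set V), {u | G.Reachable v u ∧ G.dist v u ≤ r'} ⊆ S → (ψ S v ↔ ψ Set.univ v)

lemma IsLayering.abs_sub_le_dist {V : Type*} {G : SimpleGraph V} {lam : V → ℤ}
    (h : IsLayering G lam) {u v : V} (huv : G.Reachable u v) :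
    |lam u - lam v| ≤ G.dist u v := by
  have walk_bound : ∀ {u v : V} (p : G.Walk u v), |lam u - lam v| ≤ p.length := by
    intro u v p
    induction p with
    | nil => simp
    | @cons u w v hadj q ih =>
        have := abs_sub_le (lam u) (lam w) (lam v)
        have := h hadj
        push_cast [SimpleGraph.Walk.length_cons]
        linarith
  obtain ⟨p, hp⟩ := huv.exists_walk_length_eq_dist
  exact hp ▸ walk_bound p

lemma IsLayering.ball_subset_preimage_Iv {V : Type*} {G : SimpleGraph V} {lam : V → ℤ}
    (h : IsLayering G lam) {l d r' : ℕ} {i : ℤ} {w : V} (hw : lam w ∈ Md l d i)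
    (hr' : r' ≤ d) :
    {u | G.Reachable w u ∧ G.dist w u ≤ r'} ⊆ lam ⁻¹' Iv l i := by
  rintro u ⟨hwu, hdist⟩
  have := abs_le.1 ((h.abs_sub_le_dist hwu).trans (Nat.cast_le.2 hdist))
  simp only [Md, Iv, Set.mem_Icc, Set.mem_preimage] at hw ⊢
  omega

lemma restrictSet_le {V : Type*} (G : SimpleGraph V) (U : Set V) : restrictSet G U ≤ G :=
  fun _ _ h => h.1

lemma PairwiseFar.mono {V : Type*} {G H : SimpleGraph V} {r' : ℕ} {W W' : Finset V}
    (h : PairwiseFar G r' W) (hHG : H ≤ G) (hW' : W' ⊆ W) : PairwiseFar H r' W' :=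
  fun w hw w' hw' hne hreach =>
    (h w (hW' hw) w' (hW' hw') hne (hreach.mono hHG)).trans_le (hreach.dist_anti hHG)

lemma isPlan_card_fiber {V : Type*} {l r : ℕ} {n : ℤ} (W : Finset V) (f : V → ℤ)
    (hf : ∀ w ∈ W, inCover l r n (f w)) :
    IsPlan l r n W.card fun i => (W.filter fun w => f w = i).card := by
  classical
  have hsupp : ∀ i, (W.filter fun w => f w = i).card ≠ 0 → i ∈ W.image f := by
    intro i hi
    obtain ⟨w, hw⟩ := Finset.card_ne_zero.1 hi
    rw [Finset.mem_filter] at hw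
    exact hw.2 ▸ Finset.mem_image_of_mem f hw.1
  refine ⟨(W.image f).finite_toSet.subset hsupp, fun i hi => ?_, ?_⟩
  · obtain ⟨w, hw, rfl⟩ := Finset.mem_image.1 (hsupp i hi)
    exact hf w hw
  · rw [finsum_eq_sum_of_support_subset _ hsupp,
      Finset.card_eq_sum_card_fiberwise fun w hw => Finset.mem_image_of_mem f hw]

/-- The left endpoint `i ≡ n (mod l - 2r)` with `x - 2r - (l - 2r) < i ≤ x - 2r`: the only
interval of the cover whose middle part `M_{2r}` can contain `x`. -/
def coverStart (l r : ℕ) (n x : ℤ) : ℤ := x - 2 * r - (x - 2 * r - n) % ((l : ℤ) - 2 * r)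

/-- The residues `n` for which `x` falls into the gap of length `2r` between the middle
parts of two consecutive intervals of the `(l, r)`-cover. -/
def badResidues (l r : ℕ) (x : ℤ) : Finset ℕ :=
  (Finset.range (l - 2 * r)).filter
    fun n => (l : ℤ) - 4 * r ≤ (x - 2 * r - n) % ((l : ℤ) - 2 * r)

lemma inCover_coverStart (l r : ℕ) (n x : ℤ) : inCover l r n (coverStart l r n x) := by
  unfold inCover coverStart
  convert Int.dvd_self_sub_emod (x := x - 2 * r - n) (m := (l : ℤ) - 2 * r) using 1
  ring

lemma mem_Md_coverStart {l r n : ℕ} (x : ℤ) (hn : n ∈ Finset.range (l - 2 * r))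
    (hgood : n ∉ badResidues l r x) : x ∈ Md l (2 * r) (coverStart l r n x) := by
  have hL : (0 : ℤ) < (l : ℤ) - 2 * r := by
    rw [Finset.mem_range] at hn
    omega
  have hlo := Int.emod_nonneg (x - 2 * r - n) hL.ne'
  have hhi : (x - 2 * r - n) % ((l : ℤ) - 2 * r) < (l : ℤ) - 4 * r := by
    simp only [badResidues, Finset.mem_filter, hn, true_and, not_le] at hgood
    exact hgood
  simp only [Md, coverStart, Set.mem_Icc]
  push_cast
  constructor <;> linarith

lemma card_badResidues_le (l r : ℕ) (x : ℤ) : (badResidues l r x).card ≤ 2 * r := by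
  set L : ℤ := (l : ℤ) - 2 * r
  have hmaps : Set.MapsTo (fun n : ℕ => (x - 2 * r - n) % L) (badResidues l r x)
      (Finset.Ico ((l : ℤ) - 4 * r) L) := by
    intro n hn
    simp only [badResidues, Finset.coe_filter, Finset.mem_range, Set.mem_ofPred_eq] at hn
    exact Finset.mem_Ico.2 ⟨hn.2, Int.emod_lt_of_pos _ (by omega)⟩
  have hinj : Set.InjOn (fun n : ℕ => (x - 2 * r - n) % L) (badResidues l r x) := by
    intro n hn n' hn' heq
    simp only [badResidues, Finset.coe_filter, Finset.mem_range, Set.mem_ofPred_eq] at hn hn'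
    have hdvd : L ∣ (x - 2 * r - n') - (x - 2 * r - n) := Int.ModEq.dvd heq
    have := Int.eq_zero_of_abs_lt_dvd hdvd (by rw [abs_lt]; omega)
    omega
  have := Finset.card_le_card_of_injOn _ hmaps hinj
  rwa [Int.card_Ico, show (L - ((l : ℤ) - 4 * r)).toNat = 2 * r by omega] at this

theorem stmt_13_general {V : Type*} (G : SimpleGraph V)
    (r' m : ℕ) (ψ : Set V → V → Prop) (hψ : IsLocalFamily G r' ψ)
    (W₀ : Finset V) (hW₀card : W₀.card = m) (hW₀far : PairwiseFar G r' W₀)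
    (hW₀ψ : ∀ w ∈ W₀, ψ Set.univ w)
    (lam : V → ℤ) (hlam : IsLayering G lam)
    (r l : ℕ) (hr : r' ≤ r) :
    ∃ Bad : Finset ℕ, Bad ⊆ Finset.range (l - 2 * r) ∧ Bad.card ≤ 6 * r * m ∧
      ∀ n ∈ Finset.range (l - 2 * r), n ∉ Bad →
        ∃ p : ℤ → ℕ, IsPlan l r n m p ∧
          ∀ i : ℤ, inCover l r n i →
            ∃ W : Finset V, W.card = p i ∧ (∀ w ∈ W, lam w ∈ Md l (2 * r) i) ∧
              PairwiseFar (restrictSet G (lam ⁻¹' Iv l i)) r' W ∧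
              ∀ w ∈ W, ψ (lam ⁻¹' Iv l i) w := by
  classical
  refine ⟨W₀.biUnion fun w => badResidues l r (lam w),
    Finset.biUnion_subset.2 fun _ _ => Finset.filter_subset _ _, ?_, ?_⟩
  · calc _ ≤ ∑ w ∈ W₀, (badResidues l r (lam w)).card := Finset.card_biUnion_le
      _ ≤ ∑ _w ∈ W₀, 2 * r := Finset.sum_le_sum fun w _ => card_badResidues_le l r (lam w)
      _ ≤ 6 * r * m := by rw [Finset.sum_const, hW₀card, smul_eq_mul]; nlinarith
  intro n hn hgood
  set f : V → ℤ := fun w => coverStart l r n (lam w)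
  have hmid : ∀ i, ∀ w ∈ W₀.filter fun w => f w = i, lam w ∈ Md l (2 * r) i := by
    intro i w hw
    rw [Finset.mem_filter] at hw
    exact hw.2 ▸ mem_Md_coverStart (lam w) hn fun h => hgood (Finset.mem_biUnion.2 ⟨w, hw.1, h⟩)
  refine ⟨_, hW₀card ▸ isPlan_card_fiber W₀ f fun w _ => inCover_coverStart l r n _,
    fun i _ => ⟨W₀.filter fun w => f w = i, rfl, hmid i, ?_, fun w hw => ?_⟩⟩
  · exact hW₀far.mono (restrictSet_le G _) (Finset.filter_subset _ _)
  · have hball := hlam.ball_subset_preimage_Iv (r' := r') (hmid i w hw) (by omega)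
    exact (hψ w _ hball).2 (hW₀ψ w (Finset.mem_filter.1 hw).1)

/-- If `G` contains `m` vertices pairwise at distance greater than `2r'` all satisfying
`ψ_{V(G)}`, then for all but at most `6rm` of the `l − 2r` distinct `(l, r)`-covers `R`
(indexed by residues `n ∈ {0, …, l − 2r − 1}`) there is an `m`-plan `p` for `R` such
that each interval `I ∈ R` contains a set `W_I ⊆ λ⁻¹(M_{2r}(I))` of `p(I)` vertices,
pairwise far apart in `G[λ⁻¹(I)]`, all satisfying `ψ_{λ⁻¹(I)}`. -/
theorem stmt_13 {V : Type*} [Fintype V] (G : SimpleGraph V)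
    (r' m : ℕ) (ψ : Set V → V → Prop) (hψ : IsLocalFamily G r' ψ)
    (W₀ : Finset V) (hW₀card : W₀.card = m) (hW₀far : PairwiseFar G r' W₀)
    (hW₀ψ : ∀ w ∈ W₀, ψ Set.univ w)
    (lam : V → ℤ) (hlam : IsLayering G lam)
    (r l : ℕ) (hr : r' ≤ r) (hl : 2 * r * (3 * m + 1) < l) :
    ∃ Bad : Finset ℕ, Bad ⊆ Finset.range (l - 2 * r) ∧ Bad.card ≤ 6 * r * m ∧
      ∀ n ∈ Finset.range (l - 2 * r), n ∉ Bad →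
        ∃ p : ℤ → ℕ, IsPlan l r n m p ∧
          ∀ i : ℤ, inCover l r n i →
            ∃ W : Finset V, W.card = p i ∧ (∀ w ∈ W, lam w ∈ Md l (2 * r) i) ∧
              PairwiseFar (restrictSet G (lam ⁻¹' Iv l i)) r' W ∧
              ∀ w ∈ W, ψ (lam ⁻¹' Iv l i) w :=
  stmt_13_general G r' m ψ hψ W₀ hW₀card hW₀far hW₀ψ lam hlam r l hr
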